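/- For any k ≥ 2 and dimensions d₁, …, d_k ≥ 2, the linear span S_{P,0} of the Parthasarathy space S_P and z₀ = |0⟩ ⊗ ⋯ ⊗ |0⟩ contains no nonzero product vector other than the scalar multiples of z₀. Likewise, the linear span S_{P,∞} of S_P and z_∞ = |d₁−1⟩ ⊗ ⋯ ⊗ |d_k−1⟩ contains no nonzero product vector other than the scalar multiples of z_∞. -/

import Mathlib

noncomputable section

open scoped BigOperators

/-- the multipartite Hilbert space ℂ^{d₁} ⊗ ⋯ ⊗ ℂ^{d_k}, realized as ℂ^{d₁⋯d_k} -/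
abbrev Hmulti (k : ℕ) (d : Fin k → ℕ) : Type := EuclideanSpace ℂ (∀ j, Fin (d j))

/-- elementary tensor u₁ ⊗ ⋯ ⊗ u_k -/
def tpk (k : ℕ) (d : Fin k → ℕ) (u : ∀ j, EuclideanSpace ℂ (Fin (d j))) : Hmulti k d :=
  WithLp.toLp 2 (fun i => ∏ j, u j (i j))

/-- the van der Monde vector z_λ = ⊗_j (Σ_s λ^s |s⟩) -/
def zlam (k : ℕ) (d : Fin k → ℕ) (lam : ℂ) : Hmulti k d :=
  WithLp.toLp 2 (fun i => ∏ j, lam ^ ((i j : ℕ)))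

/-- the van der Monde vector z_∞ = ⊗_j |d_j − 1⟩ -/
def zinf (k : ℕ) (d : Fin k → ℕ) : Hmulti k d :=
  WithLp.toLp 2 (fun i => ∏ j, (if (i j : ℕ) = d j - 1 then 1 else 0))

/-- the span of all van der Monde vectors -/
def Fspan (k : ℕ) (d : Fin k → ℕ) : Submodule ℂ (Hmulti k d) :=
  Submodule.span ℂ (insert (zinf k d) (Set.range (zlam k d)))

/-- the Parthasarathy completely entangled subspace -/
def SP (k : ℕ) (d : Fin k → ℕ) : Submodule ℂ (Hmulti k d) := (Fspan k d)ᗮ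

/-!
Pairing a product vector `⊗ⱼ uⱼ` with `z_λ` gives `∏ⱼ pⱼ(λ̄)`, where `pⱼ = ∑ₛ uⱼ(s) Xˢ`, while
pairing the basis vector `e_m = ⊗ⱼ |mⱼ⟩` with `z_λ` gives `λ̄ ^ |m|`. So if the product vector lies
in `S_P + ℂ e_m`, then `∏ⱼ pⱼ = c X ^ |m|`: each `pⱼ` divides a power of the prime `X`, hence is a
monomial, i.e. `uⱼ` is a multiple of some `|nⱼ⟩`, and `|n| = |m|`. Both `z₀ = e_⊥` and `z_∞ = e_⊤`
have an index comparable with every multi-index, and for such `m` the equality `|n| = |m|`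
forces `n = m`.
-/

theorem Submodule.exists_inner_eq_mul_of_mem_orthogonal_sup {𝕜 E : Type*} [RCLike 𝕜]
    [NormedAddCommGroup E] [InnerProductSpace 𝕜 E] {K : Submodule 𝕜 E} {v ξ : E}
    (h : ξ ∈ Kᗮ ⊔ 𝕜 ∙ v) : ∃ c : 𝕜, ∀ x ∈ K, inner 𝕜 x ξ = c * inner 𝕜 x v := by
  obtain ⟨η, hη, w, hw, rfl⟩ := Submodule.mem_sup.mp h
  obtain ⟨c, rfl⟩ := Submodule.mem_span_singleton.mp hw
  refine ⟨c, fun x hx => ?_⟩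
  rw [inner_add_right, Submodule.inner_right_of_mem_orthogonal hx hη, inner_smul_right, zero_add]

namespace Polynomial

theorem exists_eq_C_mul_X_pow_of_dvd_X_pow {K : Type*} [Field K] {p : K[X]} {N : ℕ}
    (h : p ∣ X ^ N) : ∃ r ≠ 0, ∃ n, p = C r * X ^ n := by
  obtain ⟨n, -, w, hw⟩ := (dvd_prime_pow prime_X N).mp h
  obtain ⟨r, hr, hCr⟩ := isUnit_iff.mp (w⁻¹).isUnit
  refine ⟨r, hr.ne_zero, n, ?_⟩
  rw [hCr, ← hw, mul_comm, Units.mul_inv_cancel_right]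

theorem ofFn_single {R : Type*} [Semiring R] [DecidableEq R] {n : ℕ} (i : Fin n) (r : R) :
    ofFn n (Pi.single i r) = C r * X ^ (i : ℕ) := by
  rw [ofFn_eq_sum_monomial, Finset.sum_eq_single i (fun j _ hj => by simp [hj]) (by simp),
    Pi.single_eq_same, C_mul_X_pow_eq_monomial]

theorem eval_ofFn {R : Type*} [CommSemiring R] [DecidableEq R] {n : ℕ} (v : Fin n → R) (t : R) :
    (ofFn n v).eval t = ∑ i : Fin n, t ^ (i : ℕ) * v i := by
  simp [ofFn_eq_sum_monomial, eval_finsetSum, mul_comm]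

theorem exists_eq_single_of_ofFn_dvd_X_pow {K : Type*} [Field K] [DecidableEq K] {n N : ℕ}
    {v : Fin n → K} (h : ofFn n v ∣ X ^ N) : ∃ i r, v = Pi.single i r := by
  obtain ⟨r, hr, m, hm⟩ := exists_eq_C_mul_X_pow_of_dvd_X_pow h
  have hmn : m < n := by
    have hn : 1 ≤ n := Nat.one_le_iff_ne_zero.mpr <| ne_zero_of_ofFn_ne_zero <| by
      rw [hm]; exact mul_ne_zero (C_ne_zero.mpr hr) (pow_ne_zero _ X_ne_zero)
    simpa [hm, natDegree_C_mul_X_pow m r hr] using ofFn_natDegree_lt hn v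
  exact ⟨⟨m, hmn⟩, r, injective_ofFn n (by rw [hm, ofFn_single])⟩

end Polynomial

section Parthasarathy

open Polynomial

variable {k : ℕ} {d : Fin k → ℕ}

theorem zlam_mem_Fspan (lam : ℂ) : zlam k d lam ∈ Fspan k d :=
  Submodule.subset_span (Set.mem_insert_of_mem _ ⟨lam, rfl⟩)

theorem inner_zlam_tpk (lam : ℂ) (u : ∀ j, EuclideanSpace ℂ (Fin (d j))) :
    inner ℂ (zlam k d lam) (tpk k d u) = ∏ j, (ofFn (d j) (u j)).eval (starRingEnd ℂ lam) := by
  simp_rw [eval_ofFn, Finset.prod_univ_sum]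
  simp [zlam, tpk, PiLp.inner_apply, map_prod, Finset.prod_mul_distrib, mul_comm]

theorem inner_zlam_single (lam : ℂ) (m : ∀ j, Fin (d j)) :
    inner ℂ (zlam k d lam) (EuclideanSpace.single m 1) = starRingEnd ℂ lam ^ ∑ j, (m j : ℕ) := by
  simp [EuclideanSpace.inner_single_right, zlam, Finset.prod_pow_eq_pow_sum]

theorem tpk_single (m : ∀ j, Fin (d j)) (r : Fin k → ℂ) :
    tpk k d (fun j => EuclideanSpace.single (m j) (r j)) = EuclideanSpace.single m (∏ j, r j) := by
  ext i
  by_cases hi : i = m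
  · simp [tpk, hi]
  · obtain ⟨j, hj⟩ := Function.ne_iff.mp hi
    simpa [tpk, hi] using Finset.prod_eq_zero (Finset.mem_univ j) (if_neg hj)

theorem ne_zero_of_tpk_ne_zero {u : ∀ j, EuclideanSpace ℂ (Fin (d j))} (h : tpk k d u ≠ 0)
    (j : Fin k) : u j ≠ 0 := by
  rintro hj
  refine h (PiLp.ext fun i => Finset.prod_eq_zero (Finset.mem_univ j) ?_)
  simp [hj]

theorem eq_of_le_of_sum_val_eq {n m : ∀ j, Fin (d j)} (hle : n ≤ m)
    (h : ∑ j, (n j : ℕ) = ∑ j, (m j : ℕ)) : n = m :=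
  funext fun j => Fin.ext <|
    (Finset.sum_eq_sum_iff_of_le fun j _ => hle j).mp h j (Finset.mem_univ j)

theorem zlam_zero_eq_single_bot [∀ j, NeZero (d j)] : zlam k d 0 = EuclideanSpace.single ⊥ 1 := by
  ext i
  simp only [zlam, PiLp.toLp_apply, zero_pow_eq, Finset.prod_boole, PiLp.single_apply, funext_iff,
    Fin.ext_iff, Pi.bot_apply, bot_eq_zero, Fin.val_zero, Finset.mem_univ, true_implies]

theorem zinf_eq_single_top [∀ j, NeZero (d j)] : zinf k d = EuclideanSpace.single ⊤ 1 := by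
  ext i
  simp only [zinf, PiLp.toLp_apply, Finset.prod_boole, PiLp.single_apply, funext_iff, Fin.ext_iff,
    Pi.top_apply, Fin.val_top, Finset.mem_univ, true_implies]

theorem exists_eq_smul_single_of_mem_SP_sup (m : ∀ j, Fin (d j)) (hm : ∀ n, n ≤ m ∨ m ≤ n)
    {u : ∀ j, EuclideanSpace ℂ (Fin (d j))}
    (hmem : tpk k d u ∈ SP k d ⊔ ℂ ∙ EuclideanSpace.single m 1) (hne : tpk k d u ≠ 0) :
    ∃ c : ℂ, tpk k d u = c • EuclideanSpace.single m 1 := by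
  obtain ⟨c, hc⟩ := Submodule.exists_inner_eq_mul_of_mem_orthogonal_sup hmem
  have hprod : ∏ j, ofFn (d j) (u j) = C c * X ^ ∑ j, (m j : ℕ) := Polynomial.funext fun t => by
    simpa [inner_zlam_tpk, inner_zlam_single, eval_prod] using
      hc _ (zlam_mem_Fspan (starRingEnd ℂ t))
  have hu0 : ∀ j, (u j).ofLp ≠ 0 := fun j => by simpa using ne_zero_of_tpk_ne_zero hne j
  have hp : ∀ j, ofFn (d j) (u j) ≠ 0 := fun j => (map_ne_zero_iff _ (injective_ofFn _)).mpr (hu0 j)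
  have hc0 : c ≠ 0 := by
    rintro rfl
    exact Finset.prod_ne_zero_iff.mpr (fun j _ => hp j) (by simpa using hprod)
  have hsingle : ∀ j, ∃ i r, (u j).ofLp = Pi.single i r := fun j =>
    exists_eq_single_of_ofFn_dvd_X_pow <|
      (dvd_C_mul hc0).mp (hprod ▸ Finset.dvd_prod_of_mem _ (Finset.mem_univ j))
  choose n r hu using hsingle
  obtain rfl : u = fun j => EuclideanSpace.single (n j) (r j) :=
    funext fun j => WithLp.ofLp_injective 2 (by rw [hu j, PiLp.ofLp_single])
  have hr : ∀ j, r j ≠ 0 := fun j => by simpa using hu0 j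
  have hdeg : ∑ j, (n j : ℕ) = ∑ j, (m j : ℕ) := by
    have h := congrArg natDegree hprod
    rw [natDegree_prod _ _ fun j _ => hp j, natDegree_C_mul_X_pow _ _ hc0] at h
    simpa [ofFn_single, natDegree_C_mul_X_pow _ _ (hr _)] using h
  obtain rfl : n = m := (hm n).elim (fun h => eq_of_le_of_sum_val_eq h hdeg)
    (fun h => (eq_of_le_of_sum_val_eq h hdeg.symm).symm)
  refine ⟨∏ j, r j, ?_⟩
  ext i
  by_cases hi : i = n <;> simp [tpk_single, hi]

end Parthasarathy

theorem statement10_general (k : ℕ) (d : Fin k → ℕ) (hd : ∀ j, 2 ≤ d j) :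
    (∀ ξ ∈ SP k d ⊔ Submodule.span ℂ {zlam k d 0}, ξ ≠ 0 →
      (∃ u, ξ = tpk k d u) → ∃ c : ℂ, ξ = c • zlam k d 0) ∧
    (∀ ξ ∈ SP k d ⊔ Submodule.span ℂ {zinf k d}, ξ ≠ 0 →
      (∃ u, ξ = tpk k d u) → ∃ c : ℂ, ξ = c • zinf k d) := by
  have : ∀ j, NeZero (d j) := fun j => ⟨by have := hd j; omega⟩
  rw [zlam_zero_eq_single_bot, zinf_eq_single_top]
  refine ⟨?_, ?_⟩ <;> rintro ξ hξ hne ⟨u, rfl⟩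
  · exact exists_eq_smul_single_of_mem_SP_sup ⊥ (fun _ => Or.inr bot_le) hξ hne
  · exact exists_eq_smul_single_of_mem_SP_sup ⊤ (fun _ => Or.inl le_top) hξ hne

theorem statement10 (k : ℕ) (hk : 2 ≤ k) (d : Fin k → ℕ) (hd : ∀ j, 2 ≤ d j) :
    (∀ ξ ∈ SP k d ⊔ Submodule.span ℂ {zlam k d 0}, ξ ≠ 0 →
      (∃ u, ξ = tpk k d u) → ∃ c : ℂ, ξ = c • zlam k d 0) ∧
    (∀ ξ ∈ SP k d ⊔ Submodule.span ℂ {zinf k d}, ξ ≠ 0 →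
      (∃ u, ξ = tpk k d u) → ∃ c : ℂ, ξ = c • zinf k d) :=
  statement10_general k d hd
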